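/- Let p be prime and f ∈ 𝔽_p[x] of degree n with 1 < n < p. If f is not a permutation polynomial modulo p (i.e. its image Ω_p is a proper subset of 𝔽_p), then |Ω_p| ≤ p − (p−1)/n. (Wan's bound, stated as an inequality of natural numbers: n·|Ω_p| ≤ n·p − (p−1).) -/

import Mathlib

/-!
Let `K = ⌊(p - 2)/n⌋`. For `1 ≤ k ≤ K` the polynomial `f ^ k` has degree `≤ p - 2`, so
`∑ₓ f(x)ᵏ = 0 = ∑ₓ xᵏ`. As `k < p` is invertible in `𝔽_p`, Newton's identities turn this
agreement of the first `K` power sums of the multisets `{f(x)}` and `{x}` into agreement of their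
first `K` elementary symmetric functions, i.e. of the top `K` coefficients of
`∏ₓ (X - f(x))` and `∏ₓ (X - x) = X ^ p - X`. Their difference therefore has degree at most
`p - 1 - K`; it vanishes on `Ω_p`, and it is nonzero because `f` is not onto. Hence
`|Ω_p| ≤ p - 1 - K`, which is Wan's bound.
-/

open Polynomial Finset

theorem FiniteField.sum_eval_eq_zero_of_natDegree_lt {F : Type*} [Field F] [Fintype F]
    (g : F[X]) (hg : g.natDegree < Fintype.card F - 1) : ∑ x, g.eval x = 0 := by
  simp_rw [eval_eq_sum_range, Finset.sum_comm (γ := F), ← Finset.mul_sum]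
  refine Finset.sum_eq_zero fun j hj => ?_
  rw [FiniteField.sum_pow_lt_card_sub_one F j (by grind), mul_zero]

theorem FiniteField.sum_eval_pow_eq_zero {F : Type*} [Field F] [Fintype F] (f : F[X]) {k : ℕ}
    (hk : k * f.natDegree < Fintype.card F - 1) : ∑ x, f.eval x ^ k = 0 := by
  simp_rw [← eval_pow]
  exact sum_eval_eq_zero_of_natDegree_lt _ (natDegree_pow_le.trans_lt hk)

section NewtonIdentities

variable {σ R : Type*} [Fintype σ] [CommRing R]

theorem mul_esymm_map_univ_eq_sum (v : σ → R) (k : ℕ) :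
    (k : R) * (univ.val.map v).esymm k = (-1) ^ (k + 1) *
      ∑ a ∈ antidiagonal k with a.1 < k,
        (-1) ^ a.1 * (univ.val.map v).esymm a.1 * ∑ i, v i ^ a.2 := by
  have h := congrArg (MvPolynomial.aeval v) (MvPolynomial.mul_esymm_eq_sum σ R k)
  simp only [map_mul, map_sum, map_pow, map_neg, map_one, map_natCast, MvPolynomial.psum,
    MvPolynomial.aeval_esymm_eq_multiset_esymm, MvPolynomial.aeval_X] at h
  exact h

theorem esymm_map_univ_eq_of_sum_pow_eq [NoZeroDivisors R] {v w : σ → R} {K : ℕ}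
    (hK : ∀ k ∈ Icc 1 K, (k : R) ≠ 0)
    (hpow : ∀ k ∈ Icc 1 K, ∑ i, v i ^ k = ∑ i, w i ^ k) :
    ∀ k ≤ K, (univ.val.map v).esymm k = (univ.val.map w).esymm k := by
  intro k
  induction k using Nat.strong_induction_on with
  | _ k ih =>
    intro hkK
    rcases Nat.eq_zero_or_pos k with rfl | hk
    · simp [Multiset.esymm]
    refine mul_left_cancel₀ (hK k (mem_Icc.2 ⟨hk, hkK⟩)) ?_
    rw [mul_esymm_map_univ_eq_sum, mul_esymm_map_univ_eq_sum]
    congr 1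
    refine sum_congr rfl fun a ha => ?_
    rw [mem_filter, HasAntidiagonal.mem_antidiagonal] at ha
    rw [ih a.1 ha.2 (by omega), hpow a.2 (mem_Icc.2 ⟨by omega, by omega⟩)]

end NewtonIdentities

theorem Multiset.natDegree_prod_X_sub_C_sub_prod_X_sub_C_le {R : Type*} [CommRing R]
    [Nontrivial R] {s t : Multiset R} (hst : card s = card t) {K : ℕ}
    (hesymm : ∀ k ≤ K, s.esymm k = t.esymm k) :
    ((s.map (X - C ·)).prod - (t.map (X - C ·)).prod).natDegree ≤ card s - 1 - K := by
  rw [natDegree_le_iff_coeff_eq_zero]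
  intro j hj
  rw [coeff_sub, sub_eq_zero]
  rcases le_or_gt j (card s) with hjs | hjs
  · rw [prod_X_sub_C_coeff s hjs, prod_X_sub_C_coeff t (hst ▸ hjs), ← hst,
      hesymm _ (by omega)]
  · rw [coeff_eq_zero_of_natDegree_lt, coeff_eq_zero_of_natDegree_lt] <;> simpa [← hst]

theorem card_range_le_of_esymm_eq {σ R : Type*} [Fintype σ] [CommRing R] [IsDomain R]
    [Fintype R] {v : σ → R} (hσ : Fintype.card σ = Fintype.card R)
    (hv : ¬ Function.Surjective v) {K : ℕ}
    (hesymm : ∀ k ≤ K, (univ.val.map v).esymm k = (univ.val.map id).esymm k) :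
    Nat.card (Set.range v) ≤ Fintype.card R - 1 - K := by
  set r := ∏ x, (X - C (v x)) - ∏ c : R, (X - C c)
  have hdeg : r.natDegree ≤ Fintype.card R - 1 - K := by
    simpa [hσ] using Multiset.natDegree_prod_X_sub_C_sub_prod_X_sub_C_le (by simp [hσ]) hesymm
  have hroots : ∀ c ∈ Set.range v, r.eval c = 0 := by
    rintro _ ⟨x, rfl⟩
    simp only [r, eval_sub, eval_prod, eval_X, eval_C]
    rw [prod_eq_zero (mem_univ x) (sub_self (v x)), prod_eq_zero (mem_univ (v x)) (sub_self (v x)),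
      sub_self]
  have hr : r ≠ 0 := by
    intro h0
    refine hv fun c => ?_
    have hc := congrArg (eval c) h0
    simp only [r, eval_sub, eval_prod, eval_X, eval_C, eval_zero,
      prod_eq_zero (mem_univ c) (sub_self c), sub_zero, prod_eq_zero_iff, mem_univ, true_and,
      sub_eq_zero] at hc
    obtain ⟨x, hx⟩ := hc
    exact ⟨x, hx.symm⟩
  calc Nat.card (Set.range v) = (Set.range v).ncard := Nat.card_coe_set_eq _
    _ ≤ (r.rootSet R).ncard :=
        Set.ncard_le_ncard (fun c hc => mem_rootSet.2 ⟨hr, by simpa using hroots c hc⟩)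
          (r.rootSet_finite R)
    _ ≤ r.natDegree := ncard_rootSet_le r R
    _ ≤ Fintype.card R - 1 - K := hdeg

theorem Nat.mul_sub_div_le (n p : ℕ) : n * (p - 1 - (p - 2) / n) ≤ n * p - (p - 1) := by
  rcases Nat.eq_zero_or_pos n with rfl | hn
  · simp
  have hle := Nat.mul_div_le (p - 2) n
  have hlt : p - 2 < n * ((p - 2) / n) + n := Nat.mul_succ n _ ▸ Nat.lt_mul_div_succ (p - 2) hn
  rw [Nat.mul_sub, Nat.mul_sub]
  omega

theorem wan_bound_general (p : ℕ) (hp : p.Prime) (f : Polynomial (ZMod p)) (n : ℕ)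
    (hn : f.natDegree = n)
    (hnotperm : ¬ Function.Surjective fun x : ZMod p => f.eval x) :
    n * Nat.card (Set.range fun x : ZMod p => f.eval x) ≤ n * p - (p - 1) := by
  have : Fact p.Prime := ⟨hp⟩
  set K := (p - 2) / n with hK
  have hKn : K * n ≤ p - 2 := Nat.div_mul_le_self _ _
  have hKp : K ≤ p - 2 := Nat.div_le_self _ _
  clear_value K
  have hp2 := hp.two_le
  have hpow : ∀ k ∈ Icc 1 K, ∑ x, f.eval x ^ k = ∑ x, id x ^ k := by
    intro k hk
    obtain ⟨-, hkK⟩ := mem_Icc.1 hk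
    have hkn : k * n ≤ K * n := Nat.mul_le_mul_right n hkK
    rw [FiniteField.sum_eval_pow_eq_zero f (by rw [ZMod.card, hn]; omega), eq_comm]
    exact FiniteField.sum_pow_lt_card_sub_one _ _ (by rw [ZMod.card]; omega)
  have hchar : ∀ k ∈ Icc 1 K, (k : ZMod p) ≠ 0 := by
    intro k hk
    obtain ⟨hk1, hkK⟩ := mem_Icc.1 hk
    rw [Ne, ZMod.natCast_eq_zero_iff]
    exact Nat.not_dvd_of_pos_of_lt hk1 (by omega)
  calc n * Nat.card (Set.range fun x : ZMod p => f.eval x) ≤ n * (p - 1 - K) := by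
        have hcard :=
          card_range_le_of_esymm_eq rfl hnotperm (esymm_map_univ_eq_of_sum_pow_eq hchar hpow)
        rw [ZMod.card] at hcard
        exact Nat.mul_le_mul_left n hcard
    _ ≤ n * p - (p - 1) := hK ▸ Nat.mul_sub_div_le n p

/-- Wan's bound: if `f ∈ 𝔽_p[x]` has degree `n` with `1 < n < p` and `f` is not a
permutation polynomial mod `p`, then `|Ω_p| ≤ p - (p-1)/n`, stated as
`n·|Ω_p| ≤ n·p - (p-1)`. -/
theorem wan_bound (p : ℕ) (hp : p.Prime) (f : Polynomial (ZMod p)) (n : ℕ)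
    (hn : f.natDegree = n) (h1 : 1 < n) (h2 : n < p)
    (hnotperm : ¬ Function.Surjective fun x : ZMod p => f.eval x) :
    n * Nat.card (Set.range fun x : ZMod p => f.eval x) ≤ n * p - (p - 1) :=
  wan_bound_general p hp f n hn hnotperm
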